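/- arXiv:2006.04641 — 4 statements merged into one kernel-verified Lean document; each statement's English description precedes it below -/
import Mathlib

section
/- Let X, Y, X̂ be finite sets with joint distribution factoring as a Markov chain Y → X → X̂ (i.e. p(y,x,x̂) = p(x) p(y|x) p(x̂|x)), and define the prediction distribution p(ŷ|x) = Σ_{x̂} p(y=ŷ|x̂) p(x̂|x) where p(y|x̂) is the induced conditional. Then the expected dual distortion E_{p(x,x̂)}[ D(p(·|x̂) ‖ p(·|x)) ] (KL divergence from the decoder to the data conditional) equals I(X̂;Ŷ) − I(X;Ŷ) + E_{p(x)}[ D(p(ŷ|x) ‖ p(y|x)) ], where Ŷ is distributed via the decoder through the chain. -/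
open Real Finset

/-! Splitting every logarithm of a quotient, each of the four terms becomes a combination of
`E_X̂[∑ dec log dec]`, `E_X[∑ pred log pred]`, `E_X[∑ pred log p(y|x)]` and `∑ qy log qy`, after
which the identity is linear. The Markov chain enters only through the marginalisations
`∑ₓ p(x) p(x̂|x) = μ(x̂)`, `∑ₓ̂ p(x̂|x) dec(y|x̂) = pred(y|x)` and `∑ₓ p(x) pred(y|x) = qy(y)`. -/

section

variable {ι κ : Type*} [Fintype ι] [Fintype κ]

theorem mul_log_div_eq_sub {a b : ℝ} (h : a ≠ 0 → b ≠ 0) :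
    a * log (a / b) = a * log a - a * log b := by
  rcases eq_or_ne a 0 with rfl | ha
  · simp
  · rw [log_div ha (h ha)]
    ring

theorem sum_mul_log_div_eq_sub (a b : κ → ℝ) (h : ∀ k, a k ≠ 0 → b k ≠ 0) :
    ∑ k, a k * log (a k / b k) = ∑ k, a k * log (a k) - ∑ k, a k * log (b k) := by
  rw [← sum_sub_distrib]
  exact sum_congr rfl fun k _ => mul_log_div_eq_sub (h k)

theorem sum_mul_sum_mul_comm (v : ι → ℝ) (A : ι → κ → ℝ) (w : κ → ℝ) :
    ∑ i, v i * ∑ k, A i k * w k = ∑ k, (∑ i, v i * A i k) * w k := by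
  simp_rw [mul_sum, sum_mul, mul_assoc]
  exact sum_comm

/-- Mutual information between an input of law `w` and the output of the channel `K`,
split into the expected negative entropy of `K` minus that of the output marginal `q`. -/
theorem sum_sum_mul_log_div_marginal_eq_sub (w : ι → ℝ) (K : κ → ι → ℝ) (q : κ → ℝ)
    (hw : ∀ i, 0 ≤ w i) (hK : ∀ k i, 0 ≤ K k i) (hq : ∀ k, q k = ∑ i, w i * K k i) :
    ∑ i, ∑ k, w i * K k i * log (K k i / q k)
      = ∑ i, w i * ∑ k, K k i * log (K k i) - ∑ k, q k * log (q k) := by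
  have hsplit : ∀ i, ∑ k, w i * K k i * log (K k i / q k)
      = w i * ∑ k, K k i * log (K k i) - w i * ∑ k, K k i * log (q k) := by
    intro i
    simp_rw [mul_assoc, ← mul_sum, ← mul_sub]
    rcases eq_or_ne (w i) 0 with hwi | hwi
    · simp [hwi]
    refine congrArg _ (sum_mul_log_div_eq_sub _ _ fun k hKki hqk => ?_)
    rw [hq, sum_eq_zero_iff_of_nonneg fun j _ => mul_nonneg (hw j) (hK k j)] at hqk
    exact mul_ne_zero hwi hKki (hqk i (mem_univ i))
  have hmarg : ∑ i, w i * ∑ k, K k i * log (q k) = ∑ k, q k * log (q k) := by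
    rw [sum_mul_sum_mul_comm]
    simp_rw [hq]
  rw [sum_congr rfl fun i _ => hsplit i, sum_sub_distrib, hmarg]

end

theorem dual_distortion_decomposition_general
    {X Y Xh : Type} [Fintype X] [Fintype Y] [Fintype Xh]
    (px : X → ℝ) (pyx : Y → X → ℝ) (pex : Xh → X → ℝ)
    (hpx : ∀ x, 0 < px x)
    (hpyx : ∀ y x, 0 < pyx y x)
    (hpex : ∀ xh x, 0 ≤ pex xh x)
    -- marginal on X̂
    (μ : Xh → ℝ) (hμ : ∀ xh, μ xh = ∑ x, px x * pex xh x)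
    -- Bayes optimal decoder p(y | x̂)
    (dec : Y → Xh → ℝ)
    (hdec : ∀ y xh, dec y xh = (∑ x, px x * pyx y x * pex xh x) / μ xh)
    -- prediction distribution p(ŷ | x)
    (pred : Y → X → ℝ)
    (hpred : ∀ y x, pred y x = ∑ xh, dec y xh * pex xh x)
    -- marginal of Ŷ
    (qy : Y → ℝ) (hqy : ∀ y, qy y = ∑ xh, μ xh * dec y xh) :
    -- expected dual distortion
    (∑ x, ∑ xh, px x * pex xh x * (∑ y, dec y xh * Real.log (dec y xh / pyx y x)))
      =
    -- I(X̂;Ŷ)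
    (∑ xh, ∑ y, μ xh * dec y xh * Real.log (dec y xh / qy y))
    -- − I(X;Ŷ)
    - (∑ x, ∑ y, px x * pred y x * Real.log (pred y x / qy y))
    -- + E_{p(x)}[ D(p(ŷ|x) ‖ p(y|x)) ]
    + (∑ x, px x * (∑ y, pred y x * Real.log (pred y x / pyx y x))) := by
  have hμ0 : ∀ xh, 0 ≤ μ xh := fun xh => by
    rw [hμ]
    exact sum_nonneg fun x _ => mul_nonneg (hpx x).le (hpex xh x)
  have hdec0 : ∀ y xh, 0 ≤ dec y xh := fun y xh => by
    rw [hdec]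
    exact div_nonneg (sum_nonneg fun x _ =>
      mul_nonneg (mul_nonneg (hpx x).le (hpyx y x).le) (hpex xh x)) (hμ0 xh)
  have hpred0 : ∀ y x, 0 ≤ pred y x := fun y x => by
    rw [hpred]
    exact sum_nonneg fun xh _ => mul_nonneg (hdec0 y xh) (hpex xh x)
  have hqy_pred : ∀ y, qy y = ∑ x, px x * pred y x := fun y => by
    simp_rw [hqy, hpred, mul_comm (dec _ _), sum_mul_sum_mul_comm, hμ]
  have hpyx_ne : ∀ y x, pyx y x ≠ 0 := fun y x => (hpyx y x).ne'
  have hdistortion :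
      ∑ x, ∑ xh, px x * pex xh x * (∑ y, dec y xh * log (dec y xh / pyx y x))
        = ∑ xh, μ xh * ∑ y, dec y xh * log (dec y xh)
          - ∑ x, px x * ∑ y, pred y x * log (pyx y x) := by
    simp_rw [sum_mul_log_div_eq_sub _ _ fun y _ => hpyx_ne y _, mul_sub, sum_sub_distrib,
      mul_assoc, ← mul_sum, sum_mul_sum_mul_comm, ← hμ, hpred, mul_comm (dec _ _)]
  rw [hdistortion, sum_sum_mul_log_div_marginal_eq_sub μ dec qy hμ0 hdec0 hqy,
    sum_sum_mul_log_div_marginal_eq_sub px pred qy (fun x => (hpx x).le) hpred0 hqy_pred]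
  simp_rw [sum_mul_log_div_eq_sub _ _ fun y _ => hpyx_ne y _, mul_sub, sum_sub_distrib]
  ring

/-- Dual distortion decomposition: under the Markov chain Y → X → X̂,
the expected dual distortion equals I(X̂;Ŷ) − I(X;Ŷ) plus the expected KL
divergence between the prediction distribution and the data conditional. -/
theorem dual_distortion_decomposition
    {X Y Xh : Type} [Fintype X] [Fintype Y] [Fintype Xh]
    (px : X → ℝ) (pyx : Y → X → ℝ) (pex : Xh → X → ℝ)
    (hpx : ∀ x, 0 < px x) (hpx1 : ∑ x, px x = 1)
    (hpyx : ∀ y x, 0 < pyx y x) (hpyx1 : ∀ x, ∑ y, pyx y x = 1)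
    (hpex : ∀ xh x, 0 ≤ pex xh x) (hpex1 : ∀ x, ∑ xh, pex xh x = 1)
    -- marginal on X̂
    (μ : Xh → ℝ) (hμ : ∀ xh, μ xh = ∑ x, px x * pex xh x)
    (hμpos : ∀ xh, 0 < μ xh)
    -- Bayes optimal decoder p(y | x̂)
    (dec : Y → Xh → ℝ)
    (hdec : ∀ y xh, dec y xh = (∑ x, px x * pyx y x * pex xh x) / μ xh)
    -- prediction distribution p(ŷ | x)
    (pred : Y → X → ℝ)
    (hpred : ∀ y x, pred y x = ∑ xh, dec y xh * pex xh x)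
    -- marginal of Ŷ
    (qy : Y → ℝ) (hqy : ∀ y, qy y = ∑ xh, μ xh * dec y xh) :
    -- expected dual distortion
    (∑ x, ∑ xh, px x * pex xh x * (∑ y, dec y xh * Real.log (dec y xh / pyx y x)))
      =
    -- I(X̂;Ŷ)
    (∑ xh, ∑ y, μ xh * dec y xh * Real.log (dec y xh / qy y))
    -- − I(X;Ŷ)
    - (∑ x, ∑ y, px x * pred y x * Real.log (pred y x / qy y))
    -- + E_{p(x)}[ D(p(ŷ|x) ‖ p(y|x)) ]
    + (∑ x, px x * (∑ y, pred y x * Real.log (pred y x / pyx y x))) :=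
  dual_distortion_decomposition_general px pyx pex hpx hpyx hpex μ hμ dec hdec pred hpred qy hqy
end

section
/- Fix a finite set Y, distributions {p(·|x)}_{x∈X} on Y with all entries strictly positive, and a distribution w on a finite set X (playing the role of p(x|x̂)). The distribution q on Y minimizing Σ_x w(x) D(q ‖ p(·|x)) over all probability distributions q on Y is the normalized weighted geometric mean: q(y) = (1/Z) Π_x p(y|x)^{w(x)}, where Z = Σ_y Π_x p(y|x)^{w(x)}. -/
/-!
Since `∑ₓ w x = 1`, the weights pull inside the logarithm:
`∑ₓ w x · q log (q / p(·|x)) = q log (q / g)` with `g = ∏ₓ p(·|x) ^ w x`.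
The objective is therefore `∑ q log (q / g)`, which equals `D(q ‖ g / Z) - log Z`.
By Gibbs' inequality it is at least `-log Z`, and `q = g / Z` attains this value.
-/

open Real Finset

namespace Real

lemma sub_le_mul_log_div {a b : ℝ} (ha : 0 ≤ a) (hb : 0 < b) : a - b ≤ a * log (a / b) := by
  have h := mul_nonneg hb.le (InformationTheory.klFun_nonneg (div_nonneg ha hb.le))
  rw [InformationTheory.klFun_apply] at h
  have expand : b * (a / b * log (a / b) + 1 - a / b) = a * log (a / b) + b - a := by
    field_simp
  linarith

lemma mul_log_div_prod_rpow {ι : Type*} [Fintype ι] {w p : ι → ℝ} (hw : ∑ i, w i = 1)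
    (hp : ∀ i, 0 < p i) (r : ℝ) :
    r * log (r / ∏ i, p i ^ w i) = ∑ i, w i * (r * log (r / p i)) := by
  rcases eq_or_ne r 0 with rfl | hr
  · simp
  have hprod : log (∏ i, p i ^ w i) = ∑ i, w i * log (p i) := by
    rw [log_prod fun i _ => (rpow_pos_of_pos (hp i) _).ne']
    exact sum_congr rfl fun i _ => log_rpow (hp i) _
  have hprod_pos : 0 < ∏ i, p i ^ w i := prod_pos fun i _ => rpow_pos_of_pos (hp i) _
  simp only [log_div hr hprod_pos.ne', log_div hr (hp _).ne', hprod]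
  rw [mul_sub, mul_sum, ← one_mul (r * log r), ← hw, sum_mul, ← sum_sub_distrib]
  exact sum_congr rfl fun i _ => by ring

lemma mul_log_div_div_const (a : ℝ) {b c : ℝ} (hb : b ≠ 0) (hc : c ≠ 0) :
    a * log (a / b) = a * log (a / (b / c)) - a * log c := by
  rcases eq_or_ne a 0 with rfl | ha
  · simp
  rw [div_div_eq_mul_div, mul_div_right_comm, log_mul (div_ne_zero ha hb) hc]
  ring

end Real

section

variable {Y : Type*} [Fintype Y]

lemma sum_mul_log_div_nonneg {q r : Y → ℝ} (hq : ∀ y, 0 ≤ q y) (hr : ∀ y, 0 < r y)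
    (hqr : ∑ y, q y = ∑ y, r y) : 0 ≤ ∑ y, q y * log (q y / r y) :=
  calc (0 : ℝ) = ∑ y, (q y - r y) := by rw [sum_sub_distrib, hqr, sub_self]
    _ ≤ _ := sum_le_sum fun y _ => sub_le_mul_log_div (hq y) (hr y)

lemma neg_log_sum_le_sum_mul_log_div {q g : Y → ℝ} (hq : ∀ y, 0 ≤ q y)
    (hq1 : ∑ y, q y = 1) (hg : ∀ y, 0 < g y) :
    -log (∑ y, g y) ≤ ∑ y, q y * log (q y / g y) := by
  have hZ : 0 < ∑ y, g y := by
    have hY : (univ : Finset Y).Nonempty :=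
      nonempty_of_sum_ne_zero (by rw [hq1]; exact one_ne_zero)
    exact sum_pos (fun y _ => hg y) hY
  have hgibbs := sum_mul_log_div_nonneg hq (fun y => div_pos (hg y) hZ)
    (by rw [← sum_div, div_self hZ.ne', hq1])
  simp only [mul_log_div_div_const (q _) (hg _).ne' hZ.ne', sum_sub_distrib, ← sum_mul, hq1]
  linarith

lemma sum_normalize_mul_log_div_eq_neg_log_sum {g : Y → ℝ} (hg : ∀ y, g y ≠ 0) :
    ∑ y, g y / (∑ z, g z) * log (g y / (∑ z, g z) / g y) = -log (∑ y, g y) := by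
  simp only [div_div_cancel_left' (hg _), log_inv, ← sum_mul, ← sum_div]
  rcases eq_or_ne (∑ y, g y) 0 with hZ | hZ
  · simp [hZ]
  · rw [div_self hZ, one_mul]

end

theorem geometric_mean_minimizes_reverse_KL_general
    {X Y : Type} [Fintype X] [Fintype Y]
    (w : X → ℝ) (hw1 : ∑ x, w x = 1)
    (p : Y → X → ℝ) (hp : ∀ y x, 0 < p y x)
    (Z : ℝ) (hZ : Z = ∑ y, ∏ x, p y x ^ w x)
    (qstar : Y → ℝ) (hqstar : ∀ y, qstar y = (∏ x, p y x ^ w x) / Z) :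
    ∀ q : Y → ℝ, (∀ y, 0 ≤ q y) → (∑ y, q y = 1) →
      (∑ x, w x * ∑ y, qstar y * Real.log (qstar y / p y x))
        ≤ (∑ x, w x * ∑ y, q y * Real.log (q y / p y x)) := by
  intro q hq hq1
  set g : Y → ℝ := fun y => ∏ x, p y x ^ w x
  have hg : ∀ y, 0 < g y := fun y => prod_pos fun x _ => rpow_pos_of_pos (hp y x) _
  have objective_eq (r : Y → ℝ) :
      ∑ x, w x * ∑ y, r y * log (r y / p y x) = ∑ y, r y * log (r y / g y) := by
    simp only [mul_sum]
    rw [sum_comm]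
    exact sum_congr rfl fun y _ => (mul_log_div_prod_rpow hw1 (hp y) (r y)).symm
  have hqstar_eq : qstar = fun y => g y / ∑ z, g z := funext fun y => by rw [hqstar, hZ]
  rw [objective_eq, objective_eq, hqstar_eq,
    sum_normalize_mul_log_div_eq_neg_log_sum fun y => (hg y).ne']
  exact neg_log_sum_le_sum_mul_log_div hq hq1 hg

/-- The normalized weighted geometric mean minimizes the average reverse KL
divergence `Σ_x w(x) D(q ‖ p(·|x))` over probability distributions `q` on `Y`. -/
theorem geometric_mean_minimizes_reverse_KL
    {X Y : Type} [Fintype X] [Fintype Y] [Nonempty Y]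
    (w : X → ℝ) (hw : ∀ x, 0 ≤ w x) (hw1 : ∑ x, w x = 1)
    (p : Y → X → ℝ) (hp : ∀ y x, 0 < p y x) (hp1 : ∀ x, ∑ y, p y x = 1)
    (Z : ℝ) (hZ : Z = ∑ y, ∏ x, p y x ^ w x)
    (qstar : Y → ℝ) (hqstar : ∀ y, qstar y = (∏ x, p y x ^ w x) / Z) :
    ∀ q : Y → ℝ, (∀ y, 0 ≤ q y) → (∑ y, q y = 1) →
      (∑ x, w x * ∑ y, qstar y * Real.log (qstar y / p y x))
        ≤ (∑ x, w x * ∑ y, q y * Real.log (q y / p y x)) :=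
  geometric_mean_minimizes_reverse_KL_general w hw1 p hp Z hZ qstar hqstar
end

section
/- The dualIB error-exponent bound: for any encoder p(x̂|x) and decoder p(y|x̂) (with induced joint distribution through the Markov chain Y → X → X̂), E_{p(y,x̂)}[ D(p(x|x̂) ‖ p(x|y)) ] = I(X;X̂) + E_{p(x,x̂)}[ D(p(y|x̂) ‖ p(y|x)) ] + H(Y|X̂) + Σ_y p(y) log p(y), and since H(Y|X̂) + Σ_y p(y) log p(y) = −I(Y;X̂) ≤ 0, we get E_{p(y,x̂)}[ D(p(x|x̂) ‖ p(x|y)) ] ≤ I(X;X̂) + E_{p(x,x̂)}[ D(p(y|x̂) ‖ p(y|x)) ]. -/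
open Real Finset

/-- The dualIB error-exponent bound: for an arbitrary decoder `dec(y|x̂)`,
the expected KL divergence `E_{p(y,x̂)}[D(p(x|x̂) ‖ p(x|y))]` decomposes as
`I(X;X̂) + E[d_dualIB] + H(Y|X̂) + E_{q(y)}[log p(y)]`, and is therefore bounded
above by `I(X;X̂) + E_{p(x,x̂)}[D(dec(·|x̂) ‖ p(·|x))]`. -/
theorem dualIB_error_exponent_bound
    {X Y Xh : Type} [Fintype X] [Fintype Y] [Fintype Xh]
    (px : X → ℝ) (pyx : Y → X → ℝ) (pex : Xh → X → ℝ)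
    (hpx : ∀ x, 0 < px x) (hpx1 : ∑ x, px x = 1)
    (hpyx : ∀ y x, 0 < pyx y x) (hpyx1 : ∀ x, ∑ y, pyx y x = 1)
    (hpex : ∀ xh x, 0 < pex xh x) (hpex1 : ∀ x, ∑ xh, pex xh x = 1)
    (μ : Xh → ℝ) (hμ : ∀ xh, μ xh = ∑ x, px x * pex xh x)
    -- induced inverse encoder p(x|x̂), label marginal p(y), conditional p(x|y)
    (inv : X → Xh → ℝ) (hinv : ∀ x xh, inv x xh = px x * pex xh x / μ xh)
    (py : Y → ℝ) (hpy : ∀ y, py y = ∑ x, px x * pyx y x)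
    (pxy : X → Y → ℝ) (hpxy : ∀ x y, pxy x y = px x * pyx y x / py y)
    -- an arbitrary (strictly positive) decoder
    (dec : Y → Xh → ℝ) (hdec : ∀ y xh, 0 < dec y xh)
    (hdec1 : ∀ xh, ∑ y, dec y xh = 1)
    -- decoder-induced label marginal
    (qy : Y → ℝ) (hqy : ∀ y, qy y = ∑ xh, μ xh * dec y xh) :
    ((∑ y, ∑ xh, μ xh * dec y xh * (∑ x, inv x xh * Real.log (inv x xh / pxy x y)))
        =
      (∑ x, ∑ xh, px x * pex xh x * Real.log (inv x xh / px x))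
      + (∑ x, ∑ xh, px x * pex xh x * (∑ y, dec y xh * Real.log (dec y xh / pyx y x)))
      + (- ∑ xh, ∑ y, μ xh * dec y xh * Real.log (dec y xh))
      + (∑ y, qy y * Real.log (py y)))
    ∧
    ((∑ y, ∑ xh, μ xh * dec y xh * (∑ x, inv x xh * Real.log (inv x xh / pxy x y)))
        ≤
      (∑ x, ∑ xh, px x * pex xh x * Real.log (inv x xh / px x))
      + (∑ x, ∑ xh, px x * pex xh x * (∑ y, dec y xh * Real.log (dec y xh / pyx y x)))) := by
  have hXne : (Finset.univ : Finset X).Nonempty := by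
    by_contra h
    rw [Finset.not_nonempty_iff_eq_empty.mp h] at hpx1
    simp at hpx1
  have hμpos : ∀ xh, 0 < μ xh := fun xh => by
    rw [hμ]; exact Finset.sum_pos (fun x _ => mul_pos (hpx x) (hpex xh x)) hXne
  have hpypos : ∀ y, 0 < py y := fun y => by
    rw [hpy]; exact Finset.sum_pos (fun x _ => mul_pos (hpx x) (hpyx y x)) hXne
  have hinvpos : ∀ x xh, 0 < inv x xh := fun x xh => by
    rw [hinv]; exact div_pos (mul_pos (hpx x) (hpex xh x)) (hμpos xh)
  have hpxypos : ∀ x y, 0 < pxy x y := fun x y => by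
    rw [hpxy]; exact div_pos (mul_pos (hpx x) (hpyx y x)) (hpypos y)
  have hμinv : ∀ x xh, μ xh * inv x xh = px x * pex xh x := fun x xh => by
    rw [hinv, mul_comm, div_mul_cancel₀ _ (hμpos xh).ne']
  have hpy1 : ∑ y, py y = 1 := by
    simp only [hpy]
    rw [Finset.sum_comm]
    calc (∑ x, ∑ y, px x * pyx y x) = ∑ x, px x * ∑ y, pyx y x := by
          exact Finset.sum_congr rfl fun x _ => (Finset.mul_sum _ _ _).symm
      _ = 1 := by simp only [hpyx1, mul_one]; exact hpx1
  have hlog : ∀ y xh x, Real.log (inv x xh / pxy x y)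
      = Real.log (inv x xh / px x) + Real.log (dec y xh / pyx y x)
        - Real.log (dec y xh) + Real.log (py y) := by
    intro y xh x
    rw [Real.log_div (hinvpos x xh).ne' (hpxypos x y).ne',
        Real.log_div (hinvpos x xh).ne' (hpx x).ne',
        Real.log_div (hdec y xh).ne' (hpyx y x).ne',
        hpxy,
        Real.log_div (mul_pos (hpx x) (hpyx y x)).ne' (hpypos y).ne',
        Real.log_mul (hpx x).ne' (hpyx y x).ne']
    ring
  -- canonical triple sum form of the LHS
  have hL : (∑ y, ∑ xh, μ xh * dec y xh * (∑ x, inv x xh * Real.log (inv x xh / pxy x y)))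
      = ∑ y, ∑ xh, ∑ x, px x * pex xh x * dec y xh * Real.log (inv x xh / pxy x y) := by
    refine Finset.sum_congr rfl fun y _ => Finset.sum_congr rfl fun xh _ => ?_
    rw [Finset.mul_sum]
    refine Finset.sum_congr rfl fun x _ => ?_
    linear_combination dec y xh * Real.log (inv x xh / pxy x y) * hμinv x xh
  -- four canonical pieces
  have e1 : (∑ x, ∑ xh, px x * pex xh x * Real.log (inv x xh / px x))
      = ∑ y, ∑ xh, ∑ x, px x * pex xh x * dec y xh * Real.log (inv x xh / px x) := by
    symm
    conv_lhs => rw [Finset.sum_comm]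
    conv_rhs => rw [Finset.sum_comm]
    refine Finset.sum_congr rfl fun xh _ => ?_
    conv_lhs => rw [Finset.sum_comm]
    refine Finset.sum_congr rfl fun x _ => ?_
    calc (∑ y, px x * pex xh x * dec y xh * Real.log (inv x xh / px x))
        = (∑ y, dec y xh) * (px x * pex xh x * Real.log (inv x xh / px x)) := by
          rw [Finset.sum_mul]; exact Finset.sum_congr rfl fun y _ => by ring
      _ = px x * pex xh x * Real.log (inv x xh / px x) := by rw [hdec1]; ring
  have e2 : (∑ x, ∑ xh, px x * pex xh x * (∑ y, dec y xh * Real.log (dec y xh / pyx y x)))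
      = ∑ y, ∑ xh, ∑ x, px x * pex xh x * dec y xh * Real.log (dec y xh / pyx y x) := by
    symm
    conv_lhs => rw [Finset.sum_comm]
    conv_rhs => rw [Finset.sum_comm]
    refine Finset.sum_congr rfl fun xh _ => ?_
    conv_lhs => rw [Finset.sum_comm]
    refine Finset.sum_congr rfl fun x _ => ?_
    rw [Finset.mul_sum]
    exact Finset.sum_congr rfl fun y _ => by ring
  have e3 : (∑ xh, ∑ y, μ xh * dec y xh * Real.log (dec y xh))
      = ∑ y, ∑ xh, ∑ x, px x * pex xh x * dec y xh * Real.log (dec y xh) := by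
    symm
    conv_lhs => rw [Finset.sum_comm]
    refine Finset.sum_congr rfl fun xh _ => Finset.sum_congr rfl fun y _ => ?_
    rw [hμ, Finset.sum_mul, Finset.sum_mul]
  have e4 : (∑ y, qy y * Real.log (py y))
      = ∑ y, ∑ xh, ∑ x, px x * pex xh x * dec y xh * Real.log (py y) := by
    refine Finset.sum_congr rfl fun y _ => ?_
    rw [hqy, Finset.sum_mul]
    refine Finset.sum_congr rfl fun xh _ => ?_
    rw [hμ, Finset.sum_mul, Finset.sum_mul]
  have hEq : (∑ y, ∑ xh, μ xh * dec y xh * (∑ x, inv x xh * Real.log (inv x xh / pxy x y)))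
      = (∑ x, ∑ xh, px x * pex xh x * Real.log (inv x xh / px x))
      + (∑ x, ∑ xh, px x * pex xh x * (∑ y, dec y xh * Real.log (dec y xh / pyx y x)))
      + (- ∑ xh, ∑ y, μ xh * dec y xh * Real.log (dec y xh))
      + (∑ y, qy y * Real.log (py y)) := by
    rw [hL, e1, e2, e3, e4]
    rw [← Finset.sum_neg_distrib]
    rw [← Finset.sum_add_distrib, ← Finset.sum_add_distrib, ← Finset.sum_add_distrib]
    refine Finset.sum_congr rfl fun y _ => ?_
    rw [← Finset.sum_neg_distrib, ← Finset.sum_add_distrib, ← Finset.sum_add_distrib,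
        ← Finset.sum_add_distrib]
    refine Finset.sum_congr rfl fun xh _ => ?_
    rw [← Finset.sum_neg_distrib, ← Finset.sum_add_distrib, ← Finset.sum_add_distrib,
        ← Finset.sum_add_distrib]
    refine Finset.sum_congr rfl fun x _ => ?_
    rw [hlog y xh x]; ring
  refine ⟨hEq, ?_⟩
  -- the remainder term is -(sum of KL divergences) ≤ 0
  have hKL : ∀ xh, 0 ≤ ∑ y, dec y xh * Real.log (dec y xh / py y) := by
    intro xh
    have h1 : ∀ y, dec y xh - py y ≤ dec y xh * Real.log (dec y xh / py y) := by
      intro y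
      have hd := hdec y xh
      have hp := hpypos y
      have hl := Real.log_le_sub_one_of_pos (div_pos hp hd)
      have h2 : dec y xh * Real.log (py y / dec y xh)
          ≤ dec y xh * (py y / dec y xh - 1) := mul_le_mul_of_nonneg_left hl hd.le
      rw [Real.log_div hp.ne' hd.ne'] at h2
      rw [Real.log_div hd.ne' hp.ne']
      have h3 : dec y xh * (py y / dec y xh - 1) = py y - dec y xh := by
        field_simp
      nlinarith [h2, h3]
    calc (0:ℝ) = ∑ y, (dec y xh - py y) := by
          rw [Finset.sum_sub_distrib, hdec1, hpy1]; ring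
      _ ≤ _ := Finset.sum_le_sum fun y _ => h1 y
  have hT34 : (- ∑ xh, ∑ y, μ xh * dec y xh * Real.log (dec y xh))
      + (∑ y, qy y * Real.log (py y)) ≤ 0 := by
    have hT4 : (∑ y, qy y * Real.log (py y))
        = ∑ xh, ∑ y, μ xh * dec y xh * Real.log (py y) := by
      rw [Finset.sum_comm]
      refine Finset.sum_congr rfl fun y _ => ?_
      rw [hqy, Finset.sum_mul]
    have hsplit : ∀ xh, μ xh * ∑ y, dec y xh * Real.log (dec y xh / py y)
        = (∑ y, μ xh * dec y xh * Real.log (dec y xh))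
          - ∑ y, μ xh * dec y xh * Real.log (py y) := by
      intro xh
      rw [Finset.mul_sum, ← Finset.sum_sub_distrib]
      refine Finset.sum_congr rfl fun y _ => ?_
      rw [Real.log_div (hdec y xh).ne' (hpypos y).ne']; ring
    have hnn : 0 ≤ ∑ xh, μ xh * ∑ y, dec y xh * Real.log (dec y xh / py y) :=
      Finset.sum_nonneg fun xh _ => mul_nonneg (hμpos xh).le (hKL xh)
    rw [hT4]
    have : (∑ xh, μ xh * ∑ y, dec y xh * Real.log (dec y xh / py y))
        = (∑ xh, ∑ y, μ xh * dec y xh * Real.log (dec y xh))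
          - ∑ xh, ∑ y, μ xh * dec y xh * Real.log (py y) := by
      rw [← Finset.sum_sub_distrib]
      exact Finset.sum_congr rfl fun xh _ => hsplit xh
    linarith [this ▸ hnn]
  linarith [hEq, hT34]
end

section
/- For the dualIB perturbation matrices defined in the binary-label case, C^{dual}_{yy'}(x̂) = Σ_{x,x̃,ỹ} w(x)w(x̃) q(ỹ) q(y') log(p(y|x)/p(ỹ|x)) · log(p(y'|x)/p(y'|x̃)), the determinant of the 2×2 matrix C^{dual}_{yy'} is zero; equivalently, 0 is always an eigenvalue. -/
open Real Finset

/-- The 2×2 dualIB perturbation matrix `C^{dual}_{yy'}` in the binary-label case is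
singular: its determinant vanishes, so 0 is always an eigenvalue. -/
theorem dualIB_C_matrix_det_zero
    {X : Type} [Fintype X]
    (w : X → ℝ) (hw : ∀ x, 0 ≤ w x) (hw1 : ∑ x, w x = 1)
    (q : Fin 2 → ℝ) (hq : ∀ y, 0 ≤ q y) (hq1 : ∑ y, q y = 1)
    (p : Fin 2 → X → ℝ) (hp : ∀ y x, 0 < p y x) (hp1 : ∀ x, ∑ y, p y x = 1)
    (C : Matrix (Fin 2) (Fin 2) ℝ)
    (hC : ∀ y y', C y y' =
      ∑ x, ∑ xt, w x * w xt * q (1 - y) * q y'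
        * Real.log (p y x / p (1 - y) x)
        * Real.log (p y' x / p y' xt)) :
    C.det = 0 := by
  set S : Fin 2 → ℝ := fun y' =>
    ∑ x, ∑ xt, w x * w xt * Real.log (p 0 x / p 1 x) * Real.log (p y' x / p y' xt) with hS
  have h0 : ∀ y', C 0 y' = q 1 * q y' * S y' := by
    intro y'
    rw [hC, hS]
    simp only [Finset.mul_sum]
    refine Finset.sum_congr rfl fun x _ => Finset.sum_congr rfl fun xt _ => ?_
    norm_num
    ring
  have h1 : ∀ y', C 1 y' = -(q 0 * q y' * S y') := by
    intro y'
    rw [hC, hS]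
    simp only [Finset.mul_sum, neg_mul, ← Finset.sum_neg_distrib]
    refine Finset.sum_congr rfl fun x _ => Finset.sum_congr rfl fun xt _ => ?_
    have : Real.log (p 1 x / p 0 x) = -Real.log (p 0 x / p 1 x) := by
      rw [Real.log_div (hp 1 x).ne' (hp 0 x).ne', Real.log_div (hp 0 x).ne' (hp 1 x).ne']
      ring
    norm_num [this]
    ring
  rw [Matrix.det_fin_two, h0, h0, h1, h1]
  ring
end
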